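/- The real vector space of vector fields on ℝ^{d+2} of the form Z(x) = Λx + Γ − (1/2)α g(x,x)ξ + α g(ξ,x)x + χx, where Λ ∈ so(d+1,1), Γ ∈ ℝ^{d+2}, α, χ ∈ ℝ subject to Λξ + χξ = 0, has dimension (d² + 3d + 8)/2. -/
import Mathlib


/-- Extended (Bargmann) space `ℝ^{d+2}` with coordinates `(x¹,…,x^d,t,s)`. -/
abbrev BSpace (d : ℕ) := Fin (d+2) → ℝ

/-- Index of the time coordinate `t = x^{d+1}`. -/
def tIdx (d : ℕ) : Fin (d+2) := ⟨d, by omega⟩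

/-- Index of the vertical coordinate `s = x^{d+2}`. -/
def sIdx (d : ℕ) : Fin (d+2) := ⟨d+1, by omega⟩

/-- Flat Bargmann metric `g = Σᵢ (dxⁱ)² + 2dt⊙ds` on `ℝ^{d+2}`. -/
def gB (d : ℕ) (x y : BSpace d) : ℝ :=
  (∑ i : Fin d, x (Fin.castAdd 2 i) * y (Fin.castAdd 2 i))
    + x (tIdx d) * y (sIdx d) + x (sIdx d) * y (tIdx d)

/-- The null vector `ξ = ∂/∂s`. -/
noncomputable def ξB (d : ℕ) : BSpace d := Pi.single (sIdx d) 1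

/-- Ambient space `ℝ^{d+2,2} = ℝ^{d+2} ⊕ ℝ²`. -/
abbrev ASpace (d : ℕ) := BSpace d × ℝ × ℝ

/-- Ambient metric `G` with Gram matrix `[[g,0,0],[0,0,1],[0,1,0]]`. -/
def GA (d : ℕ) (u v : ASpace d) : ℝ :=
  gB d u.1 v.1 + u.2.1 * v.2.2 + u.2.2 * v.2.1

/-- The special null element `Z₀ = [[0,0,ξ],[−ξ*,0,0],[0,0,0]]` of `o(d+2,2)`:
`Z₀(x,a,b) = (bξ, −θ(x), 0)` with `θ = g(ξ,·)`. -/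
noncomputable def Z0 (d : ℕ) (u : ASpace d) : ASpace d :=
  (u.2.2 • ξB d, -gB d (ξB d) u.1, 0)


namespace SchAux

variable (d : ℕ)

/-- the involution of indices swapping `t` and `s`. -/
def sw (k : Fin (d+2)) : Fin (d+2) :=
  if k = tIdx d then sIdx d else if k = sIdx d then tIdx d else k

lemma ts_ne : tIdx d ≠ sIdx d := by simp [tIdx, sIdx, Fin.ext_iff]

lemma sw_t : sw d (tIdx d) = sIdx d := by simp [sw]

lemma sw_s : sw d (sIdx d) = tIdx d := by simp [sw, (ts_ne d).symm]

lemma sw_spatial (k : Fin (d+2)) (h : k.val < d) : sw d k = k := by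
  have h1 : k ≠ tIdx d := by simp [tIdx, Fin.ext_iff]; omega
  have h2 : k ≠ sIdx d := by simp [sIdx, Fin.ext_iff]; omega
  simp [sw, h1, h2]

lemma sw_sw (k : Fin (d+2)) : sw d (sw d k) = k := by
  rcases eq_or_ne k (tIdx d) with h | h
  · subst h; rw [sw_t, sw_s]
  · rcases eq_or_ne k (sIdx d) with h2 | h2
    · subst h2; rw [sw_s, sw_t]
    · have hk : k.val < d := by
        have := k.isLt
        simp [tIdx, Fin.ext_iff] at h
        simp [sIdx, Fin.ext_iff] at h2
        omega
      rw [sw_spatial d k hk, sw_spatial d k hk]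

lemma sw_inj : Function.Injective (sw d) := fun a b h => by
  rw [← sw_sw d a, h, sw_sw]

lemma single_ne {i j : Fin (d+2)} (h : j ≠ i) :
    (Pi.single i 1 : BSpace d) j = 0 := by
  simp [Pi.single_apply, h]

lemma gB_single (i : Fin (d+2)) (v : BSpace d) :
    gB d (Pi.single i 1) v = v (sw d i) := by
  rcases lt_trichotomy i.val d with h | h | h
  · rw [sw_spatial d i h]
    have h1 : (Pi.single i 1 : BSpace d) (tIdx d) = 0 := by
      apply single_ne; simp [tIdx, Fin.ext_iff]; omega
    have h2 : (Pi.single i 1 : BSpace d) (sIdx d) = 0 := by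
      apply single_ne; simp [sIdx, Fin.ext_iff]; omega
    unfold gB
    rw [h1, h2, Finset.sum_eq_single (⟨i.val, h⟩ : Fin d)]
    · have hc : Fin.castAdd 2 (⟨i.val, h⟩ : Fin d) = i := by simp [Fin.ext_iff]
      rw [hc, Pi.single_eq_same]; ring
    · intro b _ hb
      have hc : Fin.castAdd 2 b ≠ i := by
        simp [Fin.ext_iff] at hb ⊢
        intro hco; exact hb (by omega)
      rw [single_ne d hc, zero_mul]
    · intro hn; exact absurd (Finset.mem_univ _) hn
  · have hit : i = tIdx d := by simp [tIdx, Fin.ext_iff]; omega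
    subst hit
    rw [sw_t]
    have h2 : (Pi.single (tIdx d) 1 : BSpace d) (sIdx d) = 0 := single_ne d (ts_ne d).symm
    unfold gB
    rw [h2, Pi.single_eq_same, Finset.sum_eq_zero, zero_add, one_mul, zero_mul, add_zero]
    intro b _
    have hc : Fin.castAdd 2 b ≠ tIdx d := by
      simp [tIdx, Fin.ext_iff]; omega
    rw [single_ne d hc, zero_mul]
  · have hit : i = sIdx d := by
      have := i.isLt; simp [sIdx, Fin.ext_iff]; omega
    subst hit
    rw [sw_s]
    have h2 : (Pi.single (sIdx d) 1 : BSpace d) (tIdx d) = 0 := single_ne d (ts_ne d)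
    unfold gB
    rw [h2, Pi.single_eq_same, Finset.sum_eq_zero, zero_add, one_mul, zero_mul, zero_add]
    intro b _
    have hc : Fin.castAdd 2 b ≠ sIdx d := by
      simp [sIdx, Fin.ext_iff]; omega
    rw [single_ne d hc, zero_mul]

lemma gB_symm (x y : BSpace d) : gB d x y = gB d y x := by
  unfold gB
  rw [Finset.sum_congr rfl (fun i _ => mul_comm (x (Fin.castAdd 2 i)) _)]
  ring

/-- `gB` as a bilinear map. -/
def gBl : BSpace d →ₗ[ℝ] BSpace d →ₗ[ℝ] ℝ :=
  LinearMap.mk₂ ℝ (gB d)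
    (fun x x' y => by
      unfold gB; simp only [Pi.add_apply, add_mul]
      rw [Finset.sum_add_distrib]; ring)
    (fun r x y => by
      unfold gB; simp only [Pi.smul_apply, smul_eq_mul]
      have hs : ∑ i : Fin d, r * x (Fin.castAdd 2 i) * y (Fin.castAdd 2 i)
          = r * ∑ i : Fin d, x (Fin.castAdd 2 i) * y (Fin.castAdd 2 i) := by
        rw [Finset.mul_sum]; exact Finset.sum_congr rfl fun i _ => by ring
      rw [hs]; ring)
    (fun x y y' => by
      unfold gB; simp only [Pi.add_apply, mul_add]
      rw [Finset.sum_add_distrib]; ring)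
    (fun r x y => by
      unfold gB; simp only [Pi.smul_apply, smul_eq_mul]
      have hs : ∑ i : Fin d, x (Fin.castAdd 2 i) * (r * y (Fin.castAdd 2 i))
          = r * ∑ i : Fin d, x (Fin.castAdd 2 i) * y (Fin.castAdd 2 i) := by
        rw [Finset.mul_sum]; exact Finset.sum_congr rfl fun i _ => by ring
      rw [hs]; ring)

lemma gB_eq (x y : BSpace d) : gB d x y = gBl d x y := rfl

lemma gB_smul_left (r : ℝ) (x y : BSpace d) : gB d (r • x) y = r * gB d x y := by
  simp [gB_eq]

lemma gB_smul_right (r : ℝ) (x y : BSpace d) : gB d x (r • y) = r * gB d x y := by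
  simp [gB_eq]

lemma gB_zero_left (y : BSpace d) : gB d 0 y = 0 := by simp [gB_eq]

lemma gB_zero_right (x : BSpace d) : gB d x 0 = 0 := by simp [gB_eq]

lemma gB_xi (v : BSpace d) : gB d (ξB d) v = v (tIdx d) := by
  rw [show ξB d = Pi.single (sIdx d) 1 from rfl, gB_single, sw_s]

/-- The submodule of `gB`-skew endomorphisms. -/
noncomputable def skewSet : Submodule ℝ (BSpace d →ₗ[ℝ] BSpace d) where
  carrier := {Λ | ∀ u v, gB d (Λ u) v + gB d u (Λ v) = 0}
  add_mem' := by
    intro a b ha hb u v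
    have h1 := ha u v
    have h2 := hb u v
    simp only [gB_eq] at h1 h2 ⊢
    simp only [LinearMap.add_apply, map_add, LinearMap.add_apply]
    linarith
  zero_mem' := by
    intro u v
    simp [gB_eq]
  smul_mem' := by
    intro r a ha u v
    have h1 := ha u v
    simp only [gB_eq] at h1 ⊢
    simp only [LinearMap.smul_apply, map_smul, smul_eq_mul]
    rw [← mul_add, h1, mul_zero]

/-- Elementary skew endomorphism. -/
noncomputable def Sab (a b : Fin (d+2)) : BSpace d →ₗ[ℝ] BSpace d where
  toFun x := x b • (Pi.single (sw d a) 1 : BSpace d) - x a • (Pi.single (sw d b) 1 : BSpace d)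
  map_add' x y := by simp only [Pi.add_apply, add_smul]; abel
  map_smul' r x := by
    simp only [Pi.smul_apply, smul_eq_mul, RingHom.id_apply, mul_smul, smul_sub]

lemma Sab_mem_skew (a b : Fin (d+2)) : Sab d a b ∈ skewSet d := by
  intro u v
  show gB d (u b • (Pi.single (sw d a) 1 : BSpace d) - u a • (Pi.single (sw d b) 1 : BSpace d)) v
      + gB d u (v b • (Pi.single (sw d a) 1 : BSpace d) - v a • (Pi.single (sw d b) 1 : BSpace d)) = 0
  simp only [gB_eq, map_sub, map_smul, LinearMap.sub_apply, LinearMap.smul_apply,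
    smul_eq_mul]
  simp only [← gB_eq]
  rw [gB_single, gB_single, sw_sw, sw_sw,
    gB_symm d u (Pi.single (sw d a) 1), gB_symm d u (Pi.single (sw d b) 1),
    gB_single, gB_single, sw_sw, sw_sw]
  ring

/-- Coordinates of an endomorphism with respect to the metric pairing. -/
def bcoord (Λ : BSpace d →ₗ[ℝ] BSpace d) (i j : Fin (d+2)) : ℝ :=
  Λ (Pi.single j 1) (sw d i)

lemma bcoord_eq_gB (Λ : BSpace d →ₗ[ℝ] BSpace d) (i j : Fin (d+2)) :
    bcoord d Λ i j = gB d (Pi.single i 1) (Λ (Pi.single j 1)) := by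
  rw [gB_single]; rfl

lemma bcoord_antisymm {Λ : BSpace d →ₗ[ℝ] BSpace d} (h : Λ ∈ skewSet d)
    (i j : Fin (d+2)) : bcoord d Λ i j = - bcoord d Λ j i := by
  have hs := h (Pi.single i 1) (Pi.single j 1)
  rw [bcoord_eq_gB, bcoord_eq_gB]
  rw [gB_symm d (Λ (Pi.single i 1)) (Pi.single j 1)] at hs
  linarith

lemma bcoord_Sab (a b i j : Fin (d+2)) :
    bcoord d (Sab d a b) i j
      = (if b = j then (1:ℝ) else 0) * (if i = a then 1 else 0)
        - (if a = j then (1:ℝ) else 0) * (if i = b then 1 else 0) := by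
  show ((Pi.single j 1 : BSpace d) b • (Pi.single (sw d a) 1 : BSpace d)
      - (Pi.single j 1 : BSpace d) a • (Pi.single (sw d b) 1 : BSpace d)) (sw d i) = _
  simp only [Pi.sub_apply, Pi.smul_apply, smul_eq_mul, Pi.single_apply]
  simp only [(sw_inj d).eq_iff]

def embJ (J : Fin (d+1)) : Fin (d+2) := J.castSucc
def embI (J : Fin (d+1)) (I : Fin J.val) : Fin (d+2) := ⟨I.val, by omega⟩

abbrev PairIdx := Σ J : Fin (d+1), Fin J.val
abbrev Idx := PairIdx d ⊕ Unit

/-- The linear parametrization of endomorphism parts. -/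
noncomputable def lamMap : (Idx d → ℝ) →ₗ[ℝ] (BSpace d →ₗ[ℝ] BSpace d) where
  toFun c := (∑ p : PairIdx d, c (Sum.inl p) • Sab d (embI d p.1 p.2) (embJ d p.1))
      - c (Sum.inr ()) • Sab d (tIdx d) (sIdx d)
  map_add' c c' := by
    simp only [Pi.add_apply, add_smul, Finset.sum_add_distrib]
    abel
  map_smul' r c := by
    simp only [Pi.smul_apply, smul_eq_mul, RingHom.id_apply, mul_smul, smul_sub,
      Finset.smul_sum]

lemma lamMap_skew (c : Idx d → ℝ) : lamMap d c ∈ skewSet d := by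
  refine sub_mem ?_ (Submodule.smul_mem _ _ (Sab_mem_skew d _ _))
  exact Submodule.sum_mem _ fun p _ => Submodule.smul_mem _ _ (Sab_mem_skew d _ _)

lemma xi_eval (k : Fin (d+2)) : ξB d k = if k = sIdx d then (1:ℝ) else 0 := by
  rw [show ξB d = Pi.single (sIdx d) 1 from rfl, Pi.single_apply]

lemma lamMap_xi (c : Idx d → ℝ) :
    lamMap d c (ξB d) + c (Sum.inr ()) • ξB d = 0 := by
  have h1 : ∀ p : PairIdx d, Sab d (embI d p.1 p.2) (embJ d p.1) (ξB d) = 0 := by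
    intro p
    show ξB d (embJ d p.1) • (Pi.single (sw d (embI d p.1 p.2)) 1 : BSpace d)
        - ξB d (embI d p.1 p.2) • (Pi.single (sw d (embJ d p.1)) 1 : BSpace d) = 0
    have e1 : ξB d (embJ d p.1) = 0 := by
      rw [xi_eval]
      have : embJ d p.1 ≠ sIdx d := by
        simp [embJ, sIdx, Fin.ext_iff]; omega
      simp [this]
    have e2 : ξB d (embI d p.1 p.2) = 0 := by
      rw [xi_eval]
      have : embI d p.1 p.2 ≠ sIdx d := by
        have := p.2.isLt; have := p.1.isLt
        simp [embI, sIdx, Fin.ext_iff]; omega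
      simp [this]
    rw [e1, e2]; simp
  have h2 : Sab d (tIdx d) (sIdx d) (ξB d) = ξB d := by
    show ξB d (sIdx d) • (Pi.single (sw d (tIdx d)) 1 : BSpace d)
        - ξB d (tIdx d) • (Pi.single (sw d (sIdx d)) 1 : BSpace d) = ξB d
    have e1 : ξB d (sIdx d) = 1 := by rw [xi_eval]; simp
    have e2 : ξB d (tIdx d) = 0 := by rw [xi_eval]; simp [ts_ne d]
    rw [e1, e2, sw_t]
    simp [ξB]
  show (∑ p : PairIdx d, c (Sum.inl p) • Sab d (embI d p.1 p.2) (embJ d p.1)) (ξB d)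
      - (c (Sum.inr ()) • Sab d (tIdx d) (sIdx d)) (ξB d) + c (Sum.inr ()) • ξB d = 0
  rw [LinearMap.sum_apply]
  rw [Finset.sum_eq_zero (fun p _ => by rw [LinearMap.smul_apply, h1 p, smul_zero])]
  rw [LinearMap.smul_apply, h2]
  abel

lemma bcoord_lamMap (c : Idx d → ℝ) (i j : Fin (d+2)) :
    bcoord d (lamMap d c) i j
      = (∑ p : PairIdx d,
          c (Sum.inl p) * bcoord d (Sab d (embI d p.1 p.2) (embJ d p.1)) i j)
        - c (Sum.inr ()) * bcoord d (Sab d (tIdx d) (sIdx d)) i j := by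
  unfold bcoord
  show ((∑ p : PairIdx d, c (Sum.inl p) • Sab d (embI d p.1 p.2) (embJ d p.1))
      - c (Sum.inr ()) • Sab d (tIdx d) (sIdx d)) (Pi.single j 1) (sw d i) = _
  rw [LinearMap.sub_apply, LinearMap.sum_apply]
  simp only [LinearMap.smul_apply, Pi.sub_apply, Finset.sum_apply, Pi.smul_apply,
    smul_eq_mul]

lemma bcoord_lamMap_lt (c : Idx d → ℝ) (i j : Fin (d+2))
    (hij : i.val < j.val) (hj : j.val < d+1) :
    bcoord d (lamMap d c) i j
      = c (Sum.inl ⟨⟨j.val, hj⟩, ⟨i.val, hij⟩⟩) := by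
  rw [bcoord_lamMap]
  have hunit : bcoord d (Sab d (tIdx d) (sIdx d)) i j = 0 := by
    rw [bcoord_Sab]
    have h1 : sIdx d ≠ j := by simp [sIdx, Fin.ext_iff]; omega
    have h2 : i ≠ sIdx d := by simp [sIdx, Fin.ext_iff]; omega
    simp [h1, h2]
  rw [hunit, mul_zero, sub_zero]
  rw [Finset.sum_eq_single (⟨⟨j.val, hj⟩, ⟨i.val, hij⟩⟩ : PairIdx d)]
  · rw [bcoord_Sab]
    have h1 : embJ d ⟨j.val, hj⟩ = j := by simp [embJ, Fin.ext_iff]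
    have h2 : i = embI d ⟨j.val, hj⟩ ⟨i.val, hij⟩ := by simp [embI, Fin.ext_iff]
    have hne : i ≠ j := by simp [Fin.ext_iff]; omega
    simp [h1, ← h2, hne]
  · rintro ⟨⟨Jv, hJv⟩, ⟨Iv, hIv⟩⟩ _ hp
    rw [bcoord_Sab]
    have key : ¬ (embJ d ⟨Jv, hJv⟩ = j ∧ i = embI d ⟨Jv, hJv⟩ ⟨Iv, hIv⟩) := by
      rintro ⟨ha, hb⟩
      apply hp
      have hJv2 : Jv = j.val := congrArg Fin.val ha
      have hIv2 : Iv = i.val := (congrArg Fin.val hb).symm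
      subst hJv2; subst hIv2
      rfl
    have key2 : ¬ (embI d ⟨Jv, hJv⟩ ⟨Iv, hIv⟩ = j ∧ i = embJ d ⟨Jv, hJv⟩) := by
      rintro ⟨ha, hb⟩
      have hIv2 : Iv = j.val := congrArg Fin.val ha
      have hJv2 : i.val = Jv := congrArg Fin.val hb
      have hIJ : Iv < Jv := hIv
      omega
    have t1 : (if embJ d ⟨Jv, hJv⟩ = j then (1:ℝ) else 0)
        * (if i = embI d ⟨Jv, hJv⟩ ⟨Iv, hIv⟩ then 1 else 0) = 0 := by
      by_cases hP : embJ d ⟨Jv, hJv⟩ = j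
      · by_cases hQ : i = embI d ⟨Jv, hJv⟩ ⟨Iv, hIv⟩
        · exact absurd ⟨hP, hQ⟩ key
        · simp [hQ]
      · simp [hP]
    have t2 : (if embI d ⟨Jv, hJv⟩ ⟨Iv, hIv⟩ = j then (1:ℝ) else 0)
        * (if i = embJ d ⟨Jv, hJv⟩ then 1 else 0) = 0 := by
      by_cases hP : embI d ⟨Jv, hJv⟩ ⟨Iv, hIv⟩ = j
      · by_cases hQ : i = embJ d ⟨Jv, hJv⟩
        · exact absurd ⟨hP, hQ⟩ key2
        · simp [hQ]
      · simp [hP]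
    rw [t1, t2]
    simp
  · intro hn; exact absurd (Finset.mem_univ _) hn

lemma bcoord_lamMap_s (c : Idx d → ℝ) (i : Fin (d+2)) (hi : i.val < d+1) :
    bcoord d (lamMap d c) i (sIdx d)
      = if i = tIdx d then -(c (Sum.inr ())) else 0 := by
  rw [bcoord_lamMap]
  have hsum : (∑ p : PairIdx d,
      c (Sum.inl p) * bcoord d (Sab d (embI d p.1 p.2) (embJ d p.1)) i (sIdx d)) = 0 := by
    apply Finset.sum_eq_zero
    rintro ⟨⟨Jv, hJv⟩, ⟨Iv, hIv⟩⟩ _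
    rw [bcoord_Sab]
    have h1 : embJ d ⟨Jv, hJv⟩ ≠ sIdx d := by
      simp [embJ, sIdx, Fin.ext_iff]; omega
    have h2 : embI d ⟨Jv, hJv⟩ ⟨Iv, hIv⟩ ≠ sIdx d := by
      simp [embI, sIdx, Fin.ext_iff]; omega
    simp [h1, h2]
  rw [hsum, zero_sub]
  rw [bcoord_Sab]
  have h3 : tIdx d ≠ sIdx d := ts_ne d
  have h4 : i ≠ sIdx d := by simp [sIdx, Fin.ext_iff]; omega
  by_cases h5 : i = tIdx d
  · simp [h3, h4, h5]
  · simp [h3, h4, h5]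

lemma single_eq_smul (j : Fin (d+2)) (r : ℝ) :
    (Pi.single j r : BSpace d) = r • (Pi.single j 1 : BSpace d) := by
  funext k
  simp [Pi.single_apply]

lemma lin_ext {Λ Λ' : BSpace d →ₗ[ℝ] BSpace d}
    (h : ∀ j, Λ (Pi.single j 1) = Λ' (Pi.single j 1)) : Λ = Λ' := by
  apply LinearMap.pi_ext
  intro i x
  rw [single_eq_smul d i x, map_smul, map_smul, h i]

lemma lamMap_surj {Λ : BSpace d →ₗ[ℝ] BSpace d} {χ : ℝ}
    (hΛ : Λ ∈ skewSet d) (hξ : Λ (ξB d) + χ • ξB d = 0) :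
    lamMap d (fun ix => Sum.elim
      (fun p : PairIdx d => bcoord d Λ (embI d p.1 p.2) (embJ d p.1))
      (fun _ => χ) ix) = Λ := by
  set c : Idx d → ℝ := fun ix => Sum.elim
      (fun p : PairIdx d => bcoord d Λ (embI d p.1 p.2) (embJ d p.1))
      (fun _ => χ) ix with hc
  have hΛξ : Λ (ξB d) = -χ • ξB d := by
    rw [neg_smul]; exact eq_neg_of_add_eq_zero_left hξ
  have key : ∀ i j : Fin (d+2), i.val < j.val →
      bcoord d (lamMap d c) i j = bcoord d Λ i j := by
    intro i j hij
    by_cases hj : j.val < d+1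
    · rw [bcoord_lamMap_lt d c i j hij hj]
      have h1 : embJ d ⟨j.val, hj⟩ = j := by simp [embJ, Fin.ext_iff]
      have h2 : embI d ⟨j.val, hj⟩ ⟨i.val, hij⟩ = i := by simp [embI, Fin.ext_iff]
      show bcoord d Λ (embI d ⟨j.val, hj⟩ ⟨i.val, hij⟩) (embJ d ⟨j.val, hj⟩) = _
      rw [h1, h2]
    · have hjs : j = sIdx d := by
        have := j.isLt; simp [sIdx, Fin.ext_iff]; omega
      subst hjs
      have hi : i.val < d+1 := by omega
      rw [bcoord_lamMap_s d c i hi]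
      have hb : bcoord d Λ i (sIdx d) = Λ (ξB d) (sw d i) := by
        unfold bcoord; rfl
      rw [hb, hΛξ]
      by_cases h5 : i = tIdx d
      · subst h5
        rw [sw_t]
        simp [xi_eval, c]
      · have hisp : i.val < d := by
          simp [tIdx, Fin.ext_iff] at h5; omega
        rw [sw_spatial d i hisp]
        have : ξB d i = 0 := by
          rw [xi_eval]
          have : i ≠ sIdx d := by simp [sIdx, Fin.ext_iff]; omega
          simp [this]
        simp [h5, this]
  have keyall : ∀ i j : Fin (d+2), bcoord d (lamMap d c) i j = bcoord d Λ i j := by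
    intro i j
    rcases lt_trichotomy i.val j.val with h | h | h
    · exact key i j h
    · have : i = j := Fin.ext h
      subst this
      have a1 := bcoord_antisymm d (lamMap_skew d c) i i
      have a2 := bcoord_antisymm d hΛ i i
      linarith
    · have a1 := bcoord_antisymm d (lamMap_skew d c) i j
      have a2 := bcoord_antisymm d hΛ i j
      rw [a1, a2, key j i h]
  apply lin_ext
  intro j
  funext k
  have hk := keyall (sw d k) j
  unfold bcoord at hk
  rwa [sw_sw] at hk

/-- The full parametrization of vector fields. -/
noncomputable def phiM :
    ((BSpace d →ₗ[ℝ] BSpace d) × BSpace d × ℝ × ℝ) →ₗ[ℝ] (BSpace d → BSpace d) where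
  toFun p := fun x => p.1 x + p.2.1 - (p.2.2.1 / 2 * gB d x x) • ξB d
      + (p.2.2.1 * gB d (ξB d) x) • x + p.2.2.2 • x
  map_add' p q := by
    funext x
    simp only [Prod.fst_add, Prod.snd_add, LinearMap.add_apply, Pi.add_apply,
      add_div, add_mul, add_smul]
    module
  map_smul' r p := by
    funext x
    simp only [Prod.smul_fst, Prod.smul_snd, LinearMap.smul_apply, Pi.smul_apply,
      smul_eq_mul, RingHom.id_apply, mul_div_assoc, mul_assoc, mul_smul]
    module

/-- The parametrization of the constrained parameter space. -/
noncomputable def psiM :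
    ((Idx d → ℝ) × BSpace d × ℝ) →ₗ[ℝ]
      ((BSpace d →ₗ[ℝ] BSpace d) × BSpace d × ℝ × ℝ) where
  toFun q := (lamMap d q.1, q.2.1, q.2.2, q.1 (Sum.inr ()))
  map_add' q q' := by
    simp only [Prod.fst_add, Prod.snd_add, map_add, Pi.add_apply, Prod.mk_add_mk]
  map_smul' r q := by
    simp only [Prod.smul_fst, Prod.smul_snd, map_smul, Pi.smul_apply,
      RingHom.id_apply, Prod.smul_mk, smul_eq_mul]

lemma mem_skewSet_iff (Λ : BSpace d →ₗ[ℝ] BSpace d) :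
    Λ ∈ skewSet d ↔ ∀ u v, gB d (Λ u) v + gB d u (Λ v) = 0 := Iff.rfl

lemma comp_inj : Function.Injective ⇑((phiM d).comp (psiM d)) := by
  rw [← LinearMap.ker_eq_bot, LinearMap.ker_eq_bot']
  rintro ⟨c, Γ, α⟩ hq
  set Λ := lamMap d c with hΛdef
  set χ := c (Sum.inr ()) with hχdef
  have h : ∀ x : BSpace d, Λ x + Γ - (α / 2 * gB d x x) • ξB d
      + (α * gB d (ξB d) x) • x + χ • x = 0 := by
    intro x
    have hx := congrFun hq x
    simpa [phiM, psiM] using hx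
  have hΓ : Γ = 0 := by
    have h0 := h 0
    simpa [gB_zero_left, gB_zero_right] using h0
  set u : BSpace d := Pi.single (tIdx d) 1 with hudef
  have hguu : gB d u u = 0 := by
    rw [hudef, gB_single, sw_t]
    exact single_ne d (ts_ne d).symm
  have hgxu : gB d (ξB d) u = 1 := by
    rw [gB_xi, hudef]
    exact Pi.single_eq_same _ _
  have hut : u (tIdx d) = 1 := Pi.single_eq_same _ _
  have h1 := h u
  rw [hguu, hgxu, hΓ] at h1
  have h2 := h ((2:ℝ) • u)
  rw [map_smul, gB_smul_left, gB_smul_right, gB_smul_right, hguu, hgxu, hΓ] at h2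
  have e1 := congrFun h1 (tIdx d)
  have e2 := congrFun h2 (tIdx d)
  simp only [Pi.add_apply, Pi.sub_apply, Pi.smul_apply, Pi.zero_apply, smul_eq_mul,
    hut, mul_one, mul_zero, zero_smul, add_zero, sub_zero, mul_zero] at e1 e2
  have hα : α = 0 := by linarith
  have h3 : ∀ x : BSpace d, Λ x + χ • x = 0 := by
    intro x
    have hx := h x
    rw [hΓ, hα] at hx
    simpa using hx
  have hχ : χ = 0 := by
    have hsk := lamMap_skew d c u (ξB d)
    have hΛu : Λ u = -χ • u := by
      rw [neg_smul]; exact eq_neg_of_add_eq_zero_left (h3 u)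
    have hΛξ : Λ (ξB d) = -χ • ξB d := by
      rw [neg_smul]; exact eq_neg_of_add_eq_zero_left (h3 (ξB d))
    rw [← hΛdef] at hsk
    rw [hΛu, hΛξ, gB_smul_left, gB_smul_right] at hsk
    have hgux : gB d u (ξB d) = 1 := by rw [gB_symm]; exact hgxu
    have hgu2 : gB d u (ξB d) = 1 := hgux
    rw [gB_symm d u (ξB d)] at hsk
    rw [hgxu] at hsk
    linarith
  have h4 : ∀ x : BSpace d, Λ x = 0 := by
    intro x
    have := h3 x
    rw [hχ] at this
    simpa using this
  have hc0 : c = 0 := by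
    funext ix
    rcases ix with ⟨⟨Jv, hJ⟩, ⟨Iv, hI⟩⟩ | uu
    · have hlt : (embI d ⟨Jv, hJ⟩ ⟨Iv, hI⟩).val < (embJ d ⟨Jv, hJ⟩).val := hI
      have hj2 : (embJ d ⟨Jv, hJ⟩).val < d+1 := hJ
      have hb := bcoord_lamMap_lt d c _ _ hlt hj2
      have hzero : bcoord d (lamMap d c) (embI d ⟨Jv, hJ⟩ ⟨Iv, hI⟩) (embJ d ⟨Jv, hJ⟩) = 0 := by
        unfold bcoord
        rw [show lamMap d c = Λ from rfl, h4]
        rfl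
      rw [hzero] at hb
      exact hb.symm
    · exact hχ
  rw [hc0, hΓ, hα]
  rfl

end SchAux


/-- the space of vector fields
`Z(x) = Λx + Γ − (α/2)g(x,x)ξ + α g(ξ,x)x + χx` with `Λ ∈ so(d+1,1)`,
`Γ ∈ ℝ^{d+2}`, `α, χ ∈ ℝ` and `Λξ + χξ = 0` (the Schrödinger Lie algebra
`sch(d+1,1)`) has dimension `(d² + 3d + 8)/2`. -/
theorem schroedinger_algebra_dimension (d : ℕ) :
    2 * Module.finrank ℝ
      (Submodule.span ℝ
        {Z : BSpace d → BSpace d |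
          ∃ (Λ : BSpace d →ₗ[ℝ] BSpace d) (Γ : BSpace d) (α χ : ℝ),
            (∀ u v : BSpace d, gB d (Λ u) v + gB d u (Λ v) = 0) ∧
            Λ (ξB d) + χ • ξB d = 0 ∧
            ∀ x : BSpace d, Z x =
              Λ x + Γ - (α / 2 * gB d x x) • ξB d
                + (α * gB d (ξB d) x) • x + χ • x})
      = d ^ 2 + 3 * d + 8 := by
  classical
  have hset : {Z : BSpace d → BSpace d |
          ∃ (Λ : BSpace d →ₗ[ℝ] BSpace d) (Γ : BSpace d) (α χ : ℝ),
            (∀ u v : BSpace d, gB d (Λ u) v + gB d u (Λ v) = 0) ∧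
            Λ (ξB d) + χ • ξB d = 0 ∧
            ∀ x : BSpace d, Z x =
              Λ x + Γ - (α / 2 * gB d x x) • ξB d
                + (α * gB d (ξB d) x) • x + χ • x}
      = Set.range ⇑((SchAux.phiM d).comp (SchAux.psiM d)) := by
    ext Z
    simp only [Set.mem_setOf_eq, Set.mem_range, LinearMap.coe_comp, Function.comp_apply]
    constructor
    · rintro ⟨Λ, Γ, α, χ, hskew, hξ, hZ⟩
      refine ⟨(fun ix => Sum.elim
          (fun p : SchAux.PairIdx d =>
            SchAux.bcoord d Λ (SchAux.embI d p.1 p.2) (SchAux.embJ d p.1))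
          (fun _ => χ) ix, Γ, α), ?_⟩
      have hl := SchAux.lamMap_surj d
        ((SchAux.mem_skewSet_iff d Λ).mpr hskew) hξ
      funext x
      show SchAux.phiM d (SchAux.psiM d _) x = Z x
      rw [hZ x]
      simp only [SchAux.phiM, SchAux.psiM, LinearMap.coe_mk, AddHom.coe_mk]
      rw [hl]
      rfl
    · rintro ⟨⟨c, Γ, α⟩, rfl⟩
      exact ⟨SchAux.lamMap d c, Γ, α, c (Sum.inr ()),
        (SchAux.mem_skewSet_iff d _).mp (SchAux.lamMap_skew d c),
        SchAux.lamMap_xi d c, fun x => rfl⟩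
  rw [hset]
  have hspan : Submodule.span ℝ (Set.range ⇑((SchAux.phiM d).comp (SchAux.psiM d)))
      = LinearMap.range ((SchAux.phiM d).comp (SchAux.psiM d)) := by
    rw [← LinearMap.coe_range, Submodule.span_eq]
  rw [hspan]
  rw [LinearMap.finrank_range_of_inj (SchAux.comp_inj d)]
  rw [Module.finrank_prod, Module.finrank_prod, Module.finrank_pi, Module.finrank_pi,
    Module.finrank_self]
  have hcard : Fintype.card (SchAux.Idx d) = (∑ j ∈ Finset.range (d+1), j) + 1 := by
    rw [show Fintype.card (SchAux.Idx d)
        = Fintype.card (SchAux.PairIdx d) + Fintype.card Unit from Fintype.card_sum]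
    rw [Fintype.card_sigma]
    simp only [Fintype.card_fin, Fintype.card_unit]
    rw [show (∑ x : Fin (d+1), (x:ℕ)) = ∑ j ∈ Finset.range (d+1), j from
      Fin.sum_univ_eq_sum_range (fun j => j) (d+1)]
  rw [hcard, Fintype.card_fin]
  have hg := Finset.sum_range_id_mul_two (d+1)
  have hq : (d+1) * ((d+1) - 1) = d^2 + d := by
    simp only [Nat.add_sub_cancel]
    ring
  rw [hq] at hg
  linarith
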